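/- Every connected quasi-λ-distance-balanced graph with minimum degree 1 on at least 3 vertices is a star K_{1,k} (k ≥ 2). -/

import Mathlib

open SimpleGraph

/-- `wSet G u v` is the set of vertices strictly closer to `u` than to `v`. -/
def wSet {V : Type*} (G : SimpleGraph V) (u v : V) : Set V :=
  {x | G.dist x u < G.dist x v}

/-- `G` is quasi-`lam`-distance-balanced. -/
def QuasiDB {V : Type*} (G : SimpleGraph V) (lam : ℚ) : Prop :=
  ∀ u v : V, G.Adj u v →
    ((wSet G u v).ncard : ℚ) = lam * ((wSet G v u).ncard : ℚ) ∨
    ((wSet G v u).ncard : ℚ) = lam * ((wSet G u v).ncard : ℚ)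

/-!
Let `x` be a pendant vertex with neighbour `y`. Every vertex other than `x` is strictly closer
to `y` than to `x`, so `W_xy = {x}` and `W_yx = V ∖ {x}`, which forces `λ = n - 1`. Since the two
sides of an edge are disjoint and nonempty, `λ = n - 1` makes them of sizes `1` and `n - 1` on every
edge `uv`: one side is a single endpoint, and no vertex is equidistant from `u` and `v`.
If some `u` were at distance `≥ 2` from `y`, with `v` the next vertex on a shortest path from `y`
to `u`, then `x ∈ W_yv` and `u ∈ W_vy` would make both sides of `yv` larger than one endpoint;
so `y` is adjacent to every vertex. An edge `uv` missing `y` would leave `x` at distance `2` from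
both `u` and `v`. Hence `G` is the star centred at `y`.
-/

namespace SimpleGraph

variable {V : Type*} {G : SimpleGraph V} {u v x y z : V}

lemma Reachable.exists_adj_dist_eq_add_one (h : G.Reachable u v) (hne : u ≠ v) :
    ∃ w, G.Adj u w ∧ G.dist u v = G.dist w v + 1 := by
  obtain ⟨p, hp⟩ := h.exists_walk_length_eq_dist
  cases p with
  | nil => exact absurd rfl hne
  | @cons _ w _ hadj q =>
    have hle : G.dist w v ≤ q.length := dist_le q
    have htri := hadj.reachable.dist_triangle_left v
    rw [Walk.length_cons] at hp
    rw [dist_eq_one_iff_adj.mpr hadj] at htri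
    exact ⟨w, hadj, by omega⟩

lemma Reachable.dist_eq_dist_add_one_of_leaf (h : G.Reachable x z)
    (hleaf : ∀ w, G.Adj x w → w = y) (hz : z ≠ x) : G.dist z x = G.dist z y + 1 := by
  obtain ⟨w, hxw, hdist⟩ := h.exists_adj_dist_eq_add_one hz.symm
  rw [dist_comm, hdist, hleaf w hxw, dist_comm]

noncomputable def starGraphIsoCompleteBipartite [Fintype V] [DecidableEq V] (r : V) :
    starGraph r ≃g completeBipartiteGraph (Fin 1) (Fin (Fintype.card V - 1)) where
  toEquiv := (Equiv.sumCompl (· = r)).symm.trans <| Equiv.sumCongr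
    (Fintype.equivFinOfCardEq (Fintype.card_subtype_eq r))
    (Fintype.equivFinOfCardEq (by rw [Fintype.card_subtype_compl, Fintype.card_subtype_eq]))
  map_rel_iff' {a b} := by
    by_cases ha : a = r <;> by_cases hb : b = r <;>
      simp [Equiv.sumCompl_symm_apply_of_pos, Equiv.sumCompl_symm_apply_of_neg, ha, hb,
        eq_comm (a := r)]

end SimpleGraph

section

variable {V : Type*} {G : SimpleGraph V} {u v x y z : V}

@[simp]
lemma mem_wSet : z ∈ wSet G u v ↔ G.dist z u < G.dist z v := Iff.rfl

lemma mem_wSet_self (h : G.Adj u v) : u ∈ wSet G u v := by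
  simp [dist_eq_one_iff_adj.mpr h]

lemma disjoint_wSet (G : SimpleGraph V) (u v : V) : Disjoint (wSet G u v) (wSet G v u) :=
  Set.disjoint_left.mpr fun _ huv hvu ↦ lt_asymm (mem_wSet.mp huv) hvu

lemma ncard_wSet_add_ncard_wSet_le [Finite V] (G : SimpleGraph V) (u v : V) :
    (wSet G u v).ncard + (wSet G v u).ncard ≤ Nat.card V := by
  rw [← Set.ncard_union_eq (disjoint_wSet G u v), ← Set.ncard_univ]
  exact Set.ncard_le_ncard (Set.subset_univ _)

lemma wSet_eq_singleton_of_ncard_eq_one (h : G.Adj u v) (h1 : (wSet G u v).ncard = 1) :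
    wSet G u v = {u} := by
  obtain ⟨a, ha⟩ := Set.ncard_eq_one.mp h1
  have hu := mem_wSet_self h
  rw [ha, Set.mem_singleton_iff] at hu
  rw [ha, hu]

lemma dist_ne_of_ncard_wSet_add_ncard_wSet_eq [Finite V]
    (h : (wSet G u v).ncard + (wSet G v u).ncard = Nat.card V) (z : V) :
    G.dist z u ≠ G.dist z v := by
  have hunion : wSet G u v ∪ wSet G v u = Set.univ := by
    refine Set.eq_of_subset_of_ncard_le (Set.subset_univ _) ?_
    rw [Set.ncard_univ, Set.ncard_union_eq (disjoint_wSet G u v), h]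
  have hz : z ∈ wSet G u v ∪ wSet G v u := hunion ▸ Set.mem_univ z
  rcases hz with hz | hz
  · exact hz.ne
  · exact hz.ne'

section Leaf

variable (hconn : G.Connected) (hleaf : ∀ w, G.Adj x w → w = y)
include hconn hleaf

lemma wSet_leaf_eq (hxy : G.Adj x y) : wSet G x y = {x} := by
  ext z
  rw [mem_wSet, Set.mem_singleton_iff]
  constructor
  · intro hlt
    by_contra hzx
    have := (hconn x z).dist_eq_dist_add_one_of_leaf hleaf hzx
    omega
  · rintro rfl
    simp [dist_eq_one_iff_adj.mpr hxy]

lemma wSet_leaf_neighbor_eq : wSet G y x = {x}ᶜ := by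
  ext z
  rw [mem_wSet, Set.mem_compl_iff, Set.mem_singleton_iff]
  constructor
  · rintro hlt rfl
    simp at hlt
  · intro hzx
    have := (hconn x z).dist_eq_dist_add_one_of_leaf hleaf hzx
    omega

lemma dist_eq_two_of_leaf (hyu : G.Adj y u) (hux : u ≠ x) : G.dist u x = 2 := by
  rw [(hconn x u).dist_eq_dist_add_one_of_leaf hleaf hux, SimpleGraph.dist_comm,
    dist_eq_one_iff_adj.mpr hyu]

end Leaf

lemma eq_one_and_add_eq_of_cast_eq_sub_one_mul {a b n : ℕ} (hb : 1 ≤ b) (hab : a + b ≤ n)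
    (h : (a : ℚ) = (n - 1) * b) : b = 1 ∧ a + b = n := by
  have hnb : n * b ≤ n := by
    have : (n : ℚ) * b ≤ n := by
      calc (n : ℚ) * b = a + b := by rw [h]; ring
        _ ≤ n := by exact_mod_cast hab
    exact_mod_cast this
  have hb1 : b = 1 := by nlinarith
  subst hb1
  refine ⟨rfl, ?_⟩
  have : (a : ℚ) + 1 = n := by rw [h]; ring
  exact_mod_cast this

lemma QuasiDB.eq_card_sub_one [Finite V] {lam : ℚ} (hq : QuasiDB G lam) (hlam : 1 < lam)
    (hconn : G.Connected) (hxy : G.Adj x y) (hleaf : ∀ w, G.Adj x w → w = y) :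
    lam = Nat.card V - 1 := by
  have hcompl : (({x}ᶜ : Set V).ncard : ℚ) = Nat.card V - 1 := by
    have := Set.ncard_add_ncard_compl ({x} : Set V)
    rw [Set.ncard_singleton] at this
    rw [← this]
    push_cast
    ring
  have hpos : (1 : ℚ) ≤ ({x}ᶜ : Set V).ncard := by
    exact_mod_cast (Set.ncard_pos (Set.toFinite _)).mpr ⟨y, hxy.ne.symm⟩
  have h := hq x y hxy
  rw [wSet_leaf_eq hconn hleaf hxy, wSet_leaf_neighbor_eq hconn hleaf, Set.ncard_singleton,
    hcompl, Nat.cast_one] at h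
  rw [hcompl] at hpos
  rcases h with h | h
  · nlinarith
  · linarith

section Star

variable [Finite V] (hq : QuasiDB G (Nat.card V - 1))
include hq

lemma QuasiDB.ncard_wSet (h : G.Adj u v) :
    ((wSet G u v).ncard = 1 ∨ (wSet G v u).ncard = 1) ∧
      (wSet G u v).ncard + (wSet G v u).ncard = Nat.card V := by
  have hu : 1 ≤ (wSet G u v).ncard := (Set.ncard_pos (Set.toFinite _)).mpr ⟨u, mem_wSet_self h⟩
  have hv : 1 ≤ (wSet G v u).ncard :=
    (Set.ncard_pos (Set.toFinite _)).mpr ⟨v, mem_wSet_self h.symm⟩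
  have hle := ncard_wSet_add_ncard_wSet_le G u v
  rcases hq u v h with h | h
  · obtain ⟨h1, hsum⟩ := eq_one_and_add_eq_of_cast_eq_sub_one_mul hv hle h
    exact ⟨Or.inr h1, hsum⟩
  · obtain ⟨h1, hsum⟩ := eq_one_and_add_eq_of_cast_eq_sub_one_mul hu (by omega) h
    exact ⟨Or.inl h1, by omega⟩

lemma QuasiDB.wSet_eq_singleton_or (h : G.Adj u v) : wSet G u v = {u} ∨ wSet G v u = {v} :=
  (hq.ncard_wSet h).1.imp (wSet_eq_singleton_of_ncard_eq_one h)
    (wSet_eq_singleton_of_ncard_eq_one h.symm)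

lemma QuasiDB.dist_ne (h : G.Adj u v) (z : V) : G.dist z u ≠ G.dist z v :=
  dist_ne_of_ncard_wSet_add_ncard_wSet_eq (hq.ncard_wSet h).2 z

variable (hconn : G.Connected) (hxy : G.Adj x y) (hleaf : ∀ w, G.Adj x w → w = y)
include hconn hxy hleaf

lemma QuasiDB.adj_leaf_neighbor (hu : u ≠ y) : G.Adj y u := by
  by_contra hnadj
  have h2 : 1 < G.dist y u := hconn.one_lt_dist_of_ne_of_not_adj hu.symm hnadj
  obtain ⟨v, hyv, hdist⟩ := (hconn y u).exists_adj_dist_eq_add_one hu.symm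
  have hux : u ≠ x := fun h ↦ hnadj (h ▸ hxy.symm)
  have hvx : v ≠ x := by
    intro hvx
    have := (hconn x u).dist_eq_dist_add_one_of_leaf hleaf hux
    rw [hvx, SimpleGraph.dist_comm, SimpleGraph.dist_comm (u := x)] at hdist
    omega
  have hx_mem : x ∈ wSet G y v := by
    rw [mem_wSet, SimpleGraph.dist_comm (v := v), dist_eq_two_of_leaf hconn hleaf hyv hvx,
      dist_eq_one_iff_adj.mpr hxy]
    omega
  have hu_mem : u ∈ wSet G v y := by
    rw [mem_wSet, SimpleGraph.dist_comm, SimpleGraph.dist_comm (u := u)]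
    omega
  rcases hq.wSet_eq_singleton_or hyv with hs | hs
  · rw [hs] at hx_mem
    exact hxy.ne hx_mem
  · rw [hs, Set.mem_singleton_iff] at hu_mem
    subst hu_mem
    exact hnadj hyv

lemma QuasiDB.eq_leaf_neighbor_of_adj (huv : G.Adj u v) : u = y ∨ v = y := by
  by_contra! hne
  have hux : u ≠ x := by
    rintro rfl
    exact hne.2 (hleaf v huv)
  have hvx : v ≠ x := by
    rintro rfl
    exact hne.1 (hleaf u huv.symm)
  have hu := dist_eq_two_of_leaf hconn hleaf (hq.adj_leaf_neighbor hconn hxy hleaf hne.1) hux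
  have hv := dist_eq_two_of_leaf hconn hleaf (hq.adj_leaf_neighbor hconn hxy hleaf hne.2) hvx
  rw [SimpleGraph.dist_comm] at hu hv
  exact hq.dist_ne huv x (hu.trans hv.symm)

lemma QuasiDB.eq_starGraph : G = starGraph y := by
  ext a b
  rw [starGraph_adj]
  constructor
  · intro h
    exact ⟨h.ne, hq.eq_leaf_neighbor_of_adj hconn hxy hleaf h⟩
  · rintro ⟨hne, rfl | rfl⟩
    · exact hq.adj_leaf_neighbor hconn hxy hleaf hne.symm
    · exact (hq.adj_leaf_neighbor hconn hxy hleaf hne).symm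

end Star

end

theorem stmt16_general {V : Type*} [Fintype V] [DecidableEq V] (G : SimpleGraph V)
    [DecidableRel G.Adj] (hconn : G.Connected)
    (lam : ℚ) (hlam : 1 < lam) (hq : QuasiDB G lam)
    (x : V) (hx : G.degree x = 1) :
    ∃ k : ℕ, 2 ≤ k ∧
      Nonempty (G ≃g completeBipartiteGraph (Fin 1) (Fin k)) := by
  obtain ⟨y, hxy, hleaf⟩ := degree_eq_one_iff_existsUnique_adj.mp hx
  obtain rfl := hq.eq_card_sub_one hlam hconn hxy hleaf
  have hk : 2 ≤ Fintype.card V - 1 := by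
    rw [← Nat.card_eq_fintype_card]
    have : (2 : ℚ) < Nat.card V := by linarith
    have : 2 < Nat.card V := by exact_mod_cast this
    omega
  rw [hq.eq_starGraph hconn hxy hleaf]
  exact ⟨_, hk, ⟨starGraphIsoCompleteBipartite y⟩⟩

/-- Every connected quasi-`lam`-distance-balanced graph on at least `3` vertices
having a vertex of degree `1` is a star `K_{1,k}` with `k ≥ 2`. -/
theorem stmt16 {V : Type*} [Fintype V] [DecidableEq V] (G : SimpleGraph V)
    [DecidableRel G.Adj] (hconn : G.Connected)
    (lam : ℚ) (hlam : 1 < lam) (hq : QuasiDB G lam)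
    (hcard : 3 ≤ Fintype.card V) (x : V) (hx : G.degree x = 1) :
    ∃ k : ℕ, 2 ≤ k ∧
      Nonempty (G ≃g completeBipartiteGraph (Fin 1) (Fin k)) :=
  stmt16_general G hconn lam hlam hq x hx
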